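/- Let λ be a partition with n parts and β an upper λ-tuple. The terminal pair (λ, β) is nonpermutable if and only if β is a gapless core λ-tuple that is bounded by its platform, i.e., the critical list of β is a flag critical list and β ≤ Ξ_λ(β) entrywise. -/
import Mathlib


open Finset

/-- End of the carrel containing `i`: the least `q ≥ i` with `q ∈ R` or `q = n`. -/
noncomputable def carrelEnd (R : Finset ℕ) (n i : ℕ) : ℕ := sInf {q | i ≤ q ∧ (q ∈ R ∨ q = n)}

/-- `x` is a critical index of the upper `R`-tuple `β`:
`β x - x < β j - j` for every `j` with `x < j ≤ carrelEnd R n x`. -/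
def IsCritical (R : Finset ℕ) (n : ℕ) (β : ℕ → ℕ) (x : ℕ) : Prop :=
  1 ≤ x ∧ x ≤ n ∧ ∀ j, x < j → j ≤ carrelEnd R n x → β x + j < β j + x

/-- The least critical index `≥ i`: the right end of the block of `i`. -/
noncomputable def blockEnd (R : Finset ℕ) (n : ℕ) (β : ℕ → ℕ) (i : ℕ) : ℕ :=
  sInf {x | i ≤ x ∧ IsCritical R n β x}

/-- The `R`-core map `Δ_R`. -/
noncomputable def coreT (R : Finset ℕ) (n : ℕ) (β : ℕ → ℕ) (i : ℕ) : ℕ :=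
  if 1 ≤ i ∧ i ≤ n then β (blockEnd R n β i) - (blockEnd R n β i - i) else 0

/-- The `R`-platform map `Ξ_R`. -/
noncomputable def platformT (R : Finset ℕ) (n : ℕ) (β : ℕ → ℕ) (i : ℕ) : ℕ :=
  if 1 ≤ i ∧ i ≤ n then β (blockEnd R n β i) else 0

/-- An upper tuple: entries in `[n]` with `β i ≥ i` on `[1, n]`. -/
def UpperTuple (n : ℕ) (β : ℕ → ℕ) : Prop := ∀ i, 1 ≤ i → i ≤ n → i ≤ β i ∧ β i ≤ n

/-- `R ⊆ [n-1]`. -/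
def ValidR (n : ℕ) (R : Finset ℕ) : Prop := ∀ q ∈ R, 1 ≤ q ∧ q < n

/-- An `R`-increasing tuple: strictly increasing within each carrel. -/
def RIncreasing (n : ℕ) (R : Finset ℕ) (β : ℕ → ℕ) : Prop :=
  ∀ i, 1 ≤ i → i < n → i ∉ R → β i < β (i + 1)

/-- The critical list of `β` is a flag critical list: the rightmost critical entry `β q`
of each non-final carrel is at most the leftmost critical entry of the next carrel. -/
def FlagCriticalList (R : Finset ℕ) (n : ℕ) (β : ℕ → ℕ) : Prop :=
  ∀ q ∈ R, β q ≤ β (blockEnd R n β (q + 1))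

/-- Normalization: entries outside `[1, n]` vanish. -/
def NormalizedT (n : ℕ) (β : ℕ → ℕ) : Prop := ∀ i, i = 0 ∨ n < i → β i = 0

/-- An `R`-ceiling flag: an upper flag that is a concatenation of plateaus whose
rightmost pairs are exactly its `R`-critical pairs. -/
def IsCeilingFlag (R : Finset ℕ) (n : ℕ) (ξ : ℕ → ℕ) : Prop :=
  UpperTuple n ξ ∧ (∀ i, 1 ≤ i → i < n → ξ i ≤ ξ (i + 1)) ∧
  (∀ i, 1 ≤ i → i ≤ n → (IsCritical R n ξ i ↔ (i = n ∨ i ∈ R ∨ ξ i ≠ ξ (i + 1))))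

/-- `lam` (on indices `1, ..., n`) is a partition. -/
def IsPartition (n : ℕ) (lam : ℕ → ℕ) : Prop := ∀ i, 1 ≤ i → i < n → lam (i + 1) ≤ lam i

/-- `R_λ`: the set of column lengths of the shape `λ` that are less than `n`. -/
def Rlam (n : ℕ) (lam : ℕ → ℕ) : Finset ℕ :=
  ((Finset.Icc 1 (lam 1)).image fun j => ((Finset.Icc 1 n).filter fun i => j ≤ lam i).card).filter
    (· < n)

/-- A semistandard tableau of shape `lam` with values in `[n]`:
`T i j` is the value in row `i`, column `j`. -/
def IsSSYT (n : ℕ) (lam : ℕ → ℕ) (T : ℕ → ℕ → ℕ) : Prop :=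
  (∀ i j, 1 ≤ i → i ≤ n → 1 ≤ j → j ≤ lam i → 1 ≤ T i j ∧ T i j ≤ n) ∧
  (∀ i j, 1 ≤ i → i ≤ n → 1 ≤ j → j + 1 ≤ lam i → T i j ≤ T i (j + 1)) ∧
  (∀ i j, 1 ≤ i → i + 1 ≤ n → 1 ≤ j → j ≤ lam (i + 1) → T i j < T (i + 1) j)

/-- Every entry in row `i` is at most `β i`. -/
def RowBound (n : ℕ) (lam β : ℕ → ℕ) (T : ℕ → ℕ → ℕ) : Prop :=
  ∀ i j, 1 ≤ i → i ≤ n → 1 ≤ j → j ≤ lam i → T i j ≤ β i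

/-- Normalization: values outside the shape vanish. -/
def NormalizedTab (n : ℕ) (lam : ℕ → ℕ) (T : ℕ → ℕ → ℕ) : Prop :=
  ∀ i j, ¬(1 ≤ i ∧ i ≤ n ∧ 1 ≤ j ∧ j ≤ lam i) → T i j = 0

/-- Extended depth function of a lattice path with source depth `b`, sink depth `d`,
and `u` easterly steps of depths `t 1, ..., t u`. -/
def extDepth (b d u : ℕ) (t : ℕ → ℕ) (j : ℕ) : ℕ :=
  if j = 0 then b else if j ≤ u then t j else d

/-- `t` encodes a monotone lattice path from `(a, b)` to `(a + u, d)`: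
the extended depths weakly increase. -/
def ValidPath (b d u : ℕ) (t : ℕ → ℕ) : Prop :=
  ∀ j, j ≤ u → extDepth b d u t j ≤ extDepth b d u t (j + 1)

/-- The lattice point `p` lies on the path from `(a, b)` to `(a + u, d)` encoded by `t`. -/
def OnPath (a b d u : ℕ) (t : ℕ → ℕ) (p : ℕ × ℕ) : Prop :=
  ∃ j, j ≤ u ∧ p.1 = a + j ∧ extDepth b d u t j ≤ p.2 ∧ p.2 ≤ extDepth b d u t (j + 1)

/-- The terminal pair `(λ, β)` is nonpermutable: for every nontrivial permutation `π`
of `[n]`, there is no pairwise disjoint `n`-tuple of lattice paths in which the `m`-th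
path goes from source `(n - m, m)` to sink `(λ (π m) + n - π m, β (π m))`. -/
def Nonpermutable (n : ℕ) (lam β : ℕ → ℕ) : Prop :=
  ∀ π : ℕ → ℕ, Set.BijOn π (Set.Icc 1 n) (Set.Icc 1 n) →
    (∃ m, 1 ≤ m ∧ m ≤ n ∧ π m ≠ m) →
    ¬∃ (u : ℕ → ℕ) (L : ℕ → ℕ → ℕ),
      (∀ m, 1 ≤ m → m ≤ n → n - m + u m = lam (π m) + (n - π m) ∧
        ValidPath m (β (π m)) (u m) (L m)) ∧
      (∀ m m', 1 ≤ m → m ≤ n → 1 ≤ m' → m' ≤ n → m ≠ m' →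
        ¬∃ p : ℕ × ℕ, OnPath (n - m) m (β (π m)) (u m) (L m) p ∧
          OnPath (n - m') m' (β (π m')) (u m') (L m') p)

open Classical in
/-- The complete homogeneous symmetric polynomial `h_u(i, k; x)` of degree `u`
in the variables `X i, ..., X k`. -/
noncomputable def hpoly (u i k : ℕ) : MvPolynomial ℕ ℤ :=
  ∑ t ∈ Finset.univ.filter
      (fun t : Fin u → Fin (k + 1) => (∀ a, i ≤ (t a : ℕ)) ∧ Monotone fun a => (t a : ℕ)),
    ∏ a, MvPolynomial.X ((t a : ℕ))

/-- `h_d(i, k; x)` for an integer degree `d`, vanishing when `d < 0`. -/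
noncomputable def hz (d : ℤ) (i k : ℕ) : MvPolynomial ℕ ℤ :=
  if 0 ≤ d then hpoly d.toNat i k else 0

/-- The content weight monomial `x^{Θ(T)}` of a tableau of shape `lam`. -/
noncomputable def tabWeight (n : ℕ) (lam : ℕ → ℕ) (T : ℕ → ℕ → ℕ) : MvPolynomial ℕ ℤ :=
  ∏ i ∈ Finset.Icc 1 n, ∏ j ∈ Finset.Icc 1 (lam i), MvPolynomial.X (T i j)

/-- The row bound sum `s_λ(β; x)`: sum of `x^{Θ(T)}` over `T ∈ S_λ(β)`. -/
noncomputable def rowBoundSum (n : ℕ) (lam β : ℕ → ℕ) : MvPolynomial ℕ ℤ :=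
  ∑ᶠ T ∈ {T : ℕ → ℕ → ℕ |
      IsSSYT n lam T ∧ RowBound n lam β T ∧ NormalizedTab n lam T}, tabWeight n lam T

/-- The Gessel–Viennot matrix, with `(i, j)` entry `h_{λ_j - j + i}(i, β_j; x)`
(here `i, j` are `0`-based, so the `1`-based indices are `i+1, j+1`). -/
noncomputable def gvMatrix (n : ℕ) (lam β : ℕ → ℕ) :
    Matrix (Fin n) (Fin n) (MvPolynomial ℕ ℤ) :=
  Matrix.of fun i j =>
    hz ((lam (j.1 + 1) : ℤ) - (j.1 + 1) + (i.1 + 1)) (i.1 + 1) (β (j.1 + 1))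

/-- The number of monomials of `h_d(i, k; x)`:
`0` for negative degree, `1` for degree zero, else `C(k - i + d, d)` (0 if `k < i`). -/
def monCount (d : ℤ) (i k : ℕ) : ℕ :=
  if d < 0 then 0 else if d = 0 then 1
  else if k < i then 0 else (k - i + d.toNat).choose d.toNat

/-! ### Auxiliary infrastructure -/

section Infra

variable {n : ℕ} {lam β : ℕ → ℕ}

/-- Column of the sink for value `v`. -/
def Xcol (n : ℕ) (lam : ℕ → ℕ) (v : ℕ) : ℕ := lam v + (n - v)

lemma lam_anti (hlam : IsPartition n lam) :
    ∀ i j, 1 ≤ i → i ≤ j → j ≤ n → lam j ≤ lam i := by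
  intro i j hi hij hjn
  induction j with
  | zero => omega
  | succ k ih =>
    rcases Nat.lt_or_ge i (k+1) with h | h
    · have hk : lam (k+1) ≤ lam k := hlam k (by omega) (by omega)
      exact le_trans hk (ih (by omega) (by omega))
    · have : i = k + 1 := by omega
      simp [this]

lemma Xcol_anti (hlam : IsPartition n lam) {v w : ℕ} (hv : 1 ≤ v) (hvw : v < w)
    (hw : w ≤ n) : Xcol n lam w < Xcol n lam v := by
  have := lam_anti hlam v w hv (by omega) hw
  unfold Xcol; omega

lemma mem_Rlam_iff (hlam : IsPartition n lam) {q : ℕ} :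
    q ∈ Rlam n lam ↔ 1 ≤ q ∧ q < n ∧ lam (q+1) < lam q := by
  unfold Rlam
  simp only [Finset.mem_filter, Finset.mem_image, Finset.mem_Icc]
  constructor
  · rintro ⟨⟨j, ⟨hj1, hj2⟩, hcard⟩, hqn⟩
    -- the filter set is downward closed
    set S := (Finset.Icc 1 n).filter (fun i => j ≤ lam i) with hS
    have hdc : ∀ a b : ℕ, a ∈ S → 1 ≤ b → b ≤ a → b ∈ S := by
      intro a b ha hb hba
      simp only [hS, Finset.mem_filter, Finset.mem_Icc] at ha ⊢
      exact ⟨⟨hb, by omega⟩, le_trans ha.2 (lam_anti hlam b a hb hba ha.1.2)⟩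
    have h1S : (1 : ℕ) ∈ S := by
      simp only [hS, Finset.mem_filter, Finset.mem_Icc]
      exact ⟨⟨le_refl 1, by omega⟩, hj2⟩
    have hq1 : 1 ≤ q := by
      rw [← hcard]
      exact Finset.card_pos.mpr ⟨1, h1S⟩
    -- Icc 1 q ⊆ S
    have hsub : Finset.Icc 1 q ⊆ S := by
      intro b hb
      simp only [Finset.mem_Icc] at hb
      by_contra hbS
      -- then S ⊆ Icc 1 (b-1)
      have : S ⊆ Finset.Icc 1 (b-1) := by
        intro a ha
        simp only [Finset.mem_Icc]
        have ha1 : 1 ≤ a := by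
          simp only [hS, Finset.mem_filter, Finset.mem_Icc] at ha; omega
        constructor
        · exact ha1
        · by_contra hab
          exact hbS (hdc a b ha (by omega) (by omega))
      have := Finset.card_le_card this
      rw [hcard] at this
      simp [Nat.card_Icc] at this
      omega
    have hqS : q ∈ S := hsub (by simp only [Finset.mem_Icc]; omega)
    have hq1n : q + 1 ∉ S := by
      intro h
      have : Finset.Icc 1 (q+1) ⊆ S := by
        intro b hb
        simp only [Finset.mem_Icc] at hb
        exact hdc (q+1) b h (by omega) hb.2
      have := Finset.card_le_card this
      rw [hcard] at this
      simp [Nat.card_Icc] at this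
    simp only [hS, Finset.mem_filter, Finset.mem_Icc] at hqS hq1n
    refine ⟨hq1, hqn, ?_⟩
    have : ¬ (1 ≤ q + 1 ∧ q + 1 ≤ n) ∨ ¬ j ≤ lam (q+1) := by tauto
    rcases this with h | h
    · omega
    · omega
  · rintro ⟨hq1, hqn, hdesc⟩
    refine ⟨⟨lam q, ⟨by omega, lam_anti hlam 1 q (le_refl 1) hq1 (by omega)⟩, ?_⟩, hqn⟩
    have : (Finset.Icc 1 n).filter (fun i => lam q ≤ lam i) = Finset.Icc 1 q := by
      ext a
      simp only [Finset.mem_filter, Finset.mem_Icc]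
      constructor
      · rintro ⟨⟨ha1, han⟩, hla⟩
        refine ⟨ha1, ?_⟩
        by_contra hqa
        have : lam a ≤ lam (q+1) := lam_anti hlam (q+1) a (by omega) (by omega) han
        omega
      · rintro ⟨ha1, haq⟩
        exact ⟨⟨ha1, by omega⟩, lam_anti hlam a q ha1 haq (by omega)⟩
    rw [this]
    simp [Nat.card_Icc]

end Infra

section CritInfra

variable (R : Finset ℕ) (n : ℕ) (β : ℕ → ℕ)

lemma carrelEnd_ge {i : ℕ} (hi : i ≤ n) : i ≤ carrelEnd R n i := by
  have : carrelEnd R n i ∈ {q | i ≤ q ∧ (q ∈ R ∨ q = n)} :=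
    Nat.sInf_mem ⟨n, hi, Or.inr rfl⟩
  exact this.1

lemma carrelEnd_prop {i : ℕ} (hi : i ≤ n) :
    carrelEnd R n i ∈ R ∨ carrelEnd R n i = n := by
  have : carrelEnd R n i ∈ {q | i ≤ q ∧ (q ∈ R ∨ q = n)} :=
    Nat.sInf_mem ⟨n, hi, Or.inr rfl⟩
  exact this.2

lemma carrelEnd_le {i : ℕ} (hi : i ≤ n) : carrelEnd R n i ≤ n :=
  Nat.sInf_le ⟨hi, Or.inr rfl⟩

lemma carrelEnd_min {i j : ℕ} (hij : i ≤ j) (hj : j ∈ R ∨ j = n) :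
    carrelEnd R n i ≤ j :=
  Nat.sInf_le ⟨hij, hj⟩

lemma carrelEnd_congr {i j : ℕ} (hi : i ≤ n) (hij : i ≤ j)
    (hj : j ≤ carrelEnd R n i) : carrelEnd R n j = carrelEnd R n i := by
  have h1 : carrelEnd R n j ≤ carrelEnd R n i :=
    Nat.sInf_le ⟨hj, carrelEnd_prop R n hi⟩
  have hjn : j ≤ n := le_trans hj (carrelEnd_le R n hi)
  have h2 : carrelEnd R n i ≤ carrelEnd R n j :=
    Nat.sInf_le ⟨le_trans hij (carrelEnd_ge R n hjn), carrelEnd_prop R n hjn⟩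
  omega

lemma carrelEnd_self {i : ℕ} (hi : i ≤ n) (h : i ∈ R ∨ i = n) :
    carrelEnd R n i = i := by
  have h1 : carrelEnd R n i ≤ i := Nat.sInf_le ⟨le_refl i, h⟩
  have h2 := carrelEnd_ge R n hi
  omega

lemma isCritical_carrelEnd {i : ℕ} (hi1 : 1 ≤ i) (hi : i ≤ n) :
    IsCritical R n β (carrelEnd R n i) := by
  have h1 := carrelEnd_ge R n hi
  have h2 := carrelEnd_le R n hi
  have h3 := carrelEnd_self R n (i := carrelEnd R n i) h2 (carrelEnd_prop R n hi)
  exact ⟨by omega, h2, fun j hj1 hj2 => by rw [h3] at hj2; omega⟩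

lemma isCritical_n (hn : 1 ≤ n) : IsCritical R n β n := by
  have := isCritical_carrelEnd R n β (i := n) hn (le_refl n)
  rwa [carrelEnd_self R n (le_refl n) (Or.inr rfl)] at this

lemma blockEnd_ge {i : ℕ} (hi1 : 1 ≤ i) (hi : i ≤ n) : i ≤ blockEnd R n β i := by
  have : blockEnd R n β i ∈ {x | i ≤ x ∧ IsCritical R n β x} :=
    Nat.sInf_mem ⟨carrelEnd R n i, carrelEnd_ge R n hi, isCritical_carrelEnd R n β hi1 hi⟩
  exact this.1

lemma blockEnd_crit {i : ℕ} (hi1 : 1 ≤ i) (hi : i ≤ n) :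
    IsCritical R n β (blockEnd R n β i) := by
  have : blockEnd R n β i ∈ {x | i ≤ x ∧ IsCritical R n β x} :=
    Nat.sInf_mem ⟨carrelEnd R n i, carrelEnd_ge R n hi, isCritical_carrelEnd R n β hi1 hi⟩
  exact this.2

lemma blockEnd_le_carrelEnd {i : ℕ} (hi1 : 1 ≤ i) (hi : i ≤ n) :
    blockEnd R n β i ≤ carrelEnd R n i :=
  Nat.sInf_le ⟨carrelEnd_ge R n hi, isCritical_carrelEnd R n β hi1 hi⟩

lemma blockEnd_le_n {i : ℕ} (hi1 : 1 ≤ i) (hi : i ≤ n) : blockEnd R n β i ≤ n :=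
  le_trans (blockEnd_le_carrelEnd R n β hi1 hi) (carrelEnd_le R n hi)

lemma blockEnd_of_crit {x : ℕ} (hx : IsCritical R n β x) : blockEnd R n β x = x := by
  have h1 : blockEnd R n β x ≤ x := Nat.sInf_le ⟨le_refl x, hx⟩
  have h2 := blockEnd_ge R n β hx.1 hx.2.1
  omega

lemma blockEnd_succ_eq {i : ℕ} (hi1 : 1 ≤ i) (hi : i ≤ n)
    (h : i < blockEnd R n β i) : blockEnd R n β (i+1) = blockEnd R n β i := by
  have hcrit := blockEnd_crit R n β hi1 hi
  have h1 : blockEnd R n β (i+1) ≤ blockEnd R n β i := Nat.sInf_le ⟨h, hcrit⟩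
  have hn1 : i + 1 ≤ n := by have := blockEnd_le_n R n β hi1 hi; omega
  have h2 : blockEnd R n β i ≤ blockEnd R n β (i+1) := by
    have hmem : blockEnd R n β (i+1) ∈ {x | i+1 ≤ x ∧ IsCritical R n β x} :=
      Nat.sInf_mem ⟨carrelEnd R n (i+1), carrelEnd_ge R n hn1,
        isCritical_carrelEnd R n β (by omega) hn1⟩
    exact Nat.sInf_le ⟨by have := hmem.1; omega, hmem.2⟩
  omega

/-- Monotonicity of the platform, step version. -/
lemma plat_step (hflag : FlagCriticalList R n β)
    {j : ℕ} (hj1 : 1 ≤ j) (hjn : j < n) :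
    β (blockEnd R n β j) ≤ β (blockEnd R n β (j+1)) := by
  rcases Nat.lt_or_ge j (blockEnd R n β j) with h | h
  · rw [blockEnd_succ_eq R n β hj1 (by omega) h]
  · have hbe : blockEnd R n β j = j := by
      have := blockEnd_ge R n β hj1 (by omega); omega
    rw [hbe]
    by_cases hR : j ∈ R
    · exact hflag j hR
    · -- j critical, j ∉ R, j < n
      have hcrit : IsCritical R n β j := by
        have := blockEnd_crit R n β hj1 (by omega); rwa [hbe] at this
      set y := blockEnd R n β (j+1) with hy
      have hy1 : j + 1 ≤ y := blockEnd_ge R n β (by omega) (by omega)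
      have hyce : y ≤ carrelEnd R n (j+1) := blockEnd_le_carrelEnd R n β (by omega) (by omega)
      have hcej : carrelEnd R n (j+1) = carrelEnd R n j := by
        apply carrelEnd_congr R n (by omega : j ≤ n) (by omega)
        have h1 := carrelEnd_ge R n (by omega : j ≤ n)
        rcases Nat.eq_or_lt_of_le h1 with he | hl
        · exfalso
          rcases carrelEnd_prop R n (by omega : j ≤ n) with hr | hr
          · rw [← he] at hr; exact hR hr
          · omega
        · omega
      have := hcrit.2.2 y (by omega) (by rw [← hcej]; exact hyce)
      omega

lemma plat_mono (hflag : FlagCriticalList R n β)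
    {v M : ℕ} (hv : 1 ≤ v) (hvM : v ≤ M) (hM : M ≤ n) :
    β (blockEnd R n β v) ≤ β (blockEnd R n β M) := by
  induction M with
  | zero => omega
  | succ k ih =>
    rcases Nat.eq_or_lt_of_le hvM with he | hl
    · rw [he]
    · exact le_trans (ih (by omega) (by omega)) (plat_step R n β hflag (by omega) (by omega))

/-- Under the RHS conditions, there is no witness pair. -/
lemma rhs_no_witness (hflag : FlagCriticalList R n β)
    (hbound : ∀ i, 1 ≤ i → i ≤ n → β i ≤ platformT R n β i)
    {i x : ℕ} (hi1 : 1 ≤ i) (hix : i < x) (hxn : x ≤ n)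
    (hcrit : IsCritical R n β x) (hlt : β x < β i) : False := by
  have h1 : β i ≤ β (blockEnd R n β i) := by
    have := hbound i hi1 (by omega)
    rwa [platformT, if_pos ⟨hi1, by omega⟩] at this
  have h2 : β (blockEnd R n β i) ≤ β (blockEnd R n β x) :=
    plat_mono R n β hflag hi1 (by omega) hxn
  rw [blockEnd_of_crit R n β hcrit] at h2
  omega

end CritInfra


section Witness

variable {n : ℕ} {lam β : ℕ → ℕ}

/-- A critical index below `n` has its carrel end in `R`. -/
lemma carrelEnd_mem_R_of_crit (R : Finset ℕ) (hβ : UpperTuple n β)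
    {x : ℕ} (hcrit : IsCritical R n β x) (hxn : x < n) :
    carrelEnd R n x ∈ R := by
  rcases carrelEnd_prop R n (le_of_lt hxn) with h | h
  · exact h
  · exfalso
    have hce : x < carrelEnd R n x := by
      have := carrelEnd_ge R n (le_of_lt hxn); omega
    have h2 := hcrit.2.2 (carrelEnd R n x) hce (le_refl _)
    have h3 := hβ x hcrit.1 (le_of_lt hxn)
    rw [h] at h2
    have h4 := hβ n (by omega) (le_refl n)
    omega

/-- Maximizing trick: from a pair `(i0, x)` with `β x < β i0` produce a witness. -/
lemma witness_of_pair {i0 x : ℕ} (hi0 : 1 ≤ i0) (hix : i0 < x)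
    (hlt : β x < β i0) :
    ∃ i, 1 ≤ i ∧ i < x ∧ β x < β i ∧ ∀ j, i < j → j ≤ x → β j < β i := by
  classical
  set S := (Finset.Icc i0 (x-1)).filter (fun j => β x < β j) with hS
  have hne : S.Nonempty := ⟨i0, by simp [hS, Finset.mem_filter, Finset.mem_Icc]; omega⟩
  set i := S.max' hne with hi
  have hiS : i ∈ S := S.max'_mem hne
  simp only [hS, Finset.mem_filter, Finset.mem_Icc] at hiS
  refine ⟨i, by omega, by omega, hiS.2, ?_⟩
  intro j hij hjx
  rcases Nat.eq_or_lt_of_le hjx with he | hl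
  · rw [he]; exact hiS.2
  · by_contra hc
    push_neg at hc
    have hjS : j ∈ S := by
      simp only [hS, Finset.mem_filter, Finset.mem_Icc]
      refine ⟨⟨by omega, by omega⟩, ?_⟩
      omega
    have := S.le_max' j hjS
    omega

/-- From failure of the RHS, extract a full witness for permutability. -/
lemma witness_of_notRHS (hn : 1 ≤ n) (hlam : IsPartition n lam)
    (hβ : UpperTuple n β)
    (h : ¬ (FlagCriticalList (Rlam n lam) n β ∧
        ∀ i, 1 ≤ i → i ≤ n → β i ≤ platformT (Rlam n lam) n β i)) :
    ∃ i x, 1 ≤ i ∧ i < x ∧ x ≤ n ∧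
      IsCritical (Rlam n lam) n β x ∧ 1 ≤ lam x ∧
      (∀ j, i < j → j ≤ x → β j < β i) := by
  classical
  set R := Rlam n lam with hR
  -- first produce (i0, x) with x critical and β x < β i0
  have main : ∃ i0 x, 1 ≤ i0 ∧ i0 < x ∧ x ≤ n ∧ IsCritical R n β x ∧ β x < β i0 := by
    rw [not_and_or] at h
    rcases h with h | h
    · -- flag violation
      unfold FlagCriticalList at h
      push_neg at h
      obtain ⟨q, hqR, hq⟩ := h
      have hq' : 1 ≤ q ∧ q < n ∧ lam (q+1) < lam q := (mem_Rlam_iff hlam).1 hqR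
      refine ⟨q, blockEnd R n β (q+1), by omega, ?_, ?_, ?_, by omega⟩
      · have := blockEnd_ge R n β (i := q+1) (by omega) (by omega); omega
      · exact blockEnd_le_n R n β (by omega) (by omega)
      · exact blockEnd_crit R n β (by omega) (by omega)
    · push_neg at h
      obtain ⟨i0, hi01, hi0n, hq⟩ := h
      rw [platformT, if_pos ⟨hi01, hi0n⟩] at hq
      refine ⟨i0, blockEnd R n β i0, hi01, ?_, blockEnd_le_n R n β hi01 hi0n,
        blockEnd_crit R n β hi01 hi0n, by omega⟩
      have h1 := blockEnd_ge R n β hi01 hi0n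
      rcases Nat.eq_or_lt_of_le h1 with he | hl
      · rw [← he] at hq; omega
      · omega
  obtain ⟨i0, x, hi01, hi0x, hxn, hcrit, hlt⟩ := main
  -- x < n
  have hxltn : x < n := by
    rcases Nat.eq_or_lt_of_le hxn with he | hl
    · exfalso
      have h1 := hβ i0 hi01 (by omega)
      have h2 := hβ n hn (le_refl n)
      rw [he] at hlt
      omega
    · exact hl
  -- lam x ≥ 1
  have hq := carrelEnd_mem_R_of_crit R hβ hcrit hxltn
  have hq' : 1 ≤ carrelEnd R n x ∧ carrelEnd R n x < n ∧
      lam (carrelEnd R n x + 1) < lam (carrelEnd R n x) := (mem_Rlam_iff hlam).1 hq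
  have hlamx : 1 ≤ lam x := by
    have h1 : lam (carrelEnd R n x) ≤ lam x :=
      lam_anti hlam x (carrelEnd R n x) (by omega)
        (carrelEnd_ge R n (by omega)) (by omega)
    omega
  obtain ⟨i, hi1, hix, hlt', hall⟩ := witness_of_pair hi01 hi0x hlt
  exact ⟨i, x, hi1, hix, hxn, hcrit, hlamx, hall⟩

end Witness


section PathInfra

lemma extDepth_zero {b d u : ℕ} {t : ℕ → ℕ} : extDepth b d u t 0 = b := by
  unfold extDepth; simp

lemma extDepth_ge_top {b d u : ℕ} {t : ℕ → ℕ} {j : ℕ} (h : u + 1 ≤ j) :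
    extDepth b d u t j = d := by
  unfold extDepth; rw [if_neg (by omega), if_neg (by omega)]

lemma valid_mono {b d u : ℕ} {t : ℕ → ℕ} (h : ValidPath b d u t) :
    ∀ {j k : ℕ}, j ≤ k → extDepth b d u t j ≤ extDepth b d u t k := by
  have step : ∀ j, extDepth b d u t j ≤ extDepth b d u t (j+1) := by
    intro j
    rcases le_or_gt j u with hj | hj
    · exact h j hj
    · rw [extDepth_ge_top (by omega), extDepth_ge_top (by omega)]
  intro j k hjk
  induction k with
  | zero => rw [Nat.le_zero.mp hjk]
  | succ l ih =>
    rcases Nat.eq_or_lt_of_le hjk with he | hl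
    · rw [he]
    · exact le_trans (ih (by omega)) (step l)

/-- The ordering lemma: in a disjoint pair, the path with smaller source index stays
strictly above the other one at every shared column. -/
lemma paths_ordered {n m m' bm bm' um um' : ℕ} {tm tm' : ℕ → ℕ}
    (hmm : m < m') (hm'n : m' ≤ n)
    (hv : ValidPath m bm um tm) (hv' : ValidPath m' bm' um' tm')
    (hdisj : ¬∃ p : ℕ × ℕ, OnPath (n - m) m bm um tm p ∧
      OnPath (n - m') m' bm' um' tm' p) :
    ∀ k, k ≤ um → k + (m' - m) ≤ um' →
      extDepth m bm um tm (k+1) < extDepth m' bm' um' tm' (k + (m' - m)) := by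
  intro k
  induction k with
  | zero =>
    intro h1 h2
    by_contra hc
    push_neg at hc
    refine hdisj ⟨(n - m, extDepth m' bm' um' tm' (m' - m)), ?_, ?_⟩
    · refine ⟨0, Nat.zero_le _, by simp, ?_, by simpa using hc⟩
      rw [extDepth_zero]
      calc m ≤ m' := le_of_lt hmm
        _ = extDepth m' bm' um' tm' 0 := extDepth_zero.symm
        _ ≤ _ := valid_mono hv' (Nat.zero_le _)
    · refine ⟨m' - m, by omega, ?_, le_refl _, valid_mono hv' (by omega)⟩
      show n - m = n - m' + (m' - m)
      omega
  | succ k ih =>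
    intro h1 h2
    by_contra hc
    push_neg at hc
    refine hdisj ⟨(n - m + (k+1), extDepth m' bm' um' tm' (k + 1 + (m' - m))), ?_, ?_⟩
    · refine ⟨k+1, by omega, rfl, ?_, by simpa using hc⟩
      have hIH := ih (by omega) (by omega)
      exact le_of_lt (lt_of_lt_of_le hIH (valid_mono hv' (by omega)))
    · refine ⟨k + 1 + (m' - m), by omega, ?_, le_refl _, valid_mono hv' (by omega)⟩
      show n - m + (k+1) = n - m' + (k + 1 + (m' - m))
      omega

end PathInfra

section Necessity

variable {n : ℕ} {lam β : ℕ → ℕ}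

/-- Under the RHS conditions, the terminal pair is nonpermutable. -/
lemma nonperm_of_rhs (hn : 1 ≤ n) (hlam : IsPartition n lam) (hβ : UpperTuple n β)
    (hflag : FlagCriticalList (Rlam n lam) n β)
    (hbound : ∀ i, 1 ≤ i → i ≤ n → β i ≤ platformT (Rlam n lam) n β i) :
    Nonpermutable n lam β := by
  classical
  set R := Rlam n lam with hR
  intro π hbij hmoved
  rintro ⟨u, L, hpaths, hdisj⟩
  -- the largest moved index
  set S := (Finset.Icc 1 n).filter (fun m => π m ≠ m) with hS
  have hSne : S.Nonempty := by
    obtain ⟨m0, h1, h2, h3⟩ := hmoved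
    exact ⟨m0, by simp [hS, Finset.mem_filter, Finset.mem_Icc]; exact ⟨⟨h1, h2⟩, h3⟩⟩
  set M := S.max' hSne with hM
  have hMS : M ∈ S := S.max'_mem hSne
  simp only [hS, Finset.mem_filter, Finset.mem_Icc] at hMS
  obtain ⟨⟨hM1, hMn⟩, hMmoved⟩ := hMS
  have hfix : ∀ w, M < w → w ≤ n → π w = w := by
    intro w hw1 hw2
    by_contra hc
    have : w ∈ S := by simp [hS, Finset.mem_filter, Finset.mem_Icc]; exact ⟨⟨by omega, hw2⟩, hc⟩
    have := S.le_max' w this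
    omega
  have hπmem : ∀ m, 1 ≤ m → m ≤ n → 1 ≤ π m ∧ π m ≤ n := by
    intro m h1 h2
    have := hbij.mapsTo (Set.mem_Icc.mpr ⟨h1, h2⟩)
    exact Set.mem_Icc.mp this
  -- π M < M
  set v := π M with hv
  have hv1 : 1 ≤ v ∧ v ≤ n := hπmem M hM1 hMn
  have hvM : v < M := by
    rcases Nat.lt_or_ge v M with h | h
    · exact h
    · exfalso
      rcases Nat.eq_or_lt_of_le h with he | hl
      · exact hMmoved he.symm
      · have hw := hfix v hl hv1.2
        have := hbij.injOn (Set.mem_Icc.mpr ⟨by omega, hv1.2⟩)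
          (Set.mem_Icc.mpr ⟨hM1, hMn⟩) hw
        omega
  -- preimage of M
  have hMim : M ∈ π '' (Set.Icc 1 n) := hbij.surjOn (Set.mem_Icc.mpr ⟨hM1, hMn⟩)
  obtain ⟨t, htmem, hπt⟩ := hMim
  rw [Set.mem_Icc] at htmem
  have htM : t < M := by
    rcases Nat.lt_or_ge t M with h | h
    · exact h
    · exfalso
      rcases Nat.eq_or_lt_of_le h with he | hl
      · rw [← he] at hπt; exact hMmoved hπt
      · have := hfix t hl htmem.2; omega
  -- abbreviations
  have heqn : ∀ m, 1 ≤ m → m ≤ n → n - m + u m = Xcol n lam (π m) :=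
    fun m h1 h2 => (hpaths m h1 h2).1
  have hval : ∀ m, 1 ≤ m → m ≤ n → ValidPath m (β (π m)) (u m) (L m) :=
    fun m h1 h2 => (hpaths m h1 h2).2
  have hXv : Xcol n lam M < Xcol n lam v := Xcol_anti hlam hv1.1 hvM hMn
  -- convenient: e m j
  have hord : ∀ m m', 1 ≤ m → m < m' → m' ≤ n →
      ∀ k, k ≤ u m → k + (m' - m) ≤ u m' →
      extDepth m (β (π m)) (u m) (L m) (k+1) <
        extDepth m' (β (π m')) (u m') (L m') (k + (m' - m)) := by
    intro m m' h1 h2 h3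
    exact paths_ordered h2 h3 (hval m h1 (by omega)) (hval m' (by omega) h3)
      (hdisj m m' h1 (by omega) (by omega) h3 (by omega))
  -- base: β M < lo_M(X_M)
  have hXM : n - t + u t = Xcol n lam M := by rw [heqn t htmem.1 htmem.2, hπt]
  have hXMv : n - M + u M = Xcol n lam v := heqn M hM1 hMn
  have hXMge : Xcol n lam M ≥ n - M := by
    have : Xcol n lam M ≥ n - t := by omega
    omega
  have hbase : β M + 0 < extDepth M (β (π M)) (u M) (L M) (Xcol n lam M - (n - M)) := by
    have h := hord t M htmem.1 htM hMn (u t) (le_refl _) (by omega)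
    have htop : extDepth t (β (π t)) (u t) (L t) (u t + 1) = β M := by
      rw [extDepth_ge_top (le_refl _), hπt]
    rw [htop] at h
    have harith : u t + (M - t) = Xcol n lam M - (n - M) := by omega
    rw [harith] at h
    omega
  -- the carrel end of M
  set q := carrelEnd R n M with hq
  have hqM := carrelEnd_ge R n hMn
  have hqn := carrelEnd_le R n hMn
  -- λ M ≥ 1
  have hlamM : 1 ≤ lam M := by
    have : Xcol n lam M ≥ n - t := by omega
    unfold Xcol at this
    omega
  -- λ constant on [M, q)
  have hlamconst : ∀ j, M ≤ j → j < q → lam (j+1) = lam j := by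
    intro j hj1 hj2
    have hjR : j ∉ R := by
      intro hc
      have := carrelEnd_min R n hj1 (Or.inl hc)
      omega
    have h1 : ¬ (1 ≤ j ∧ j < n ∧ lam (j+1) < lam j) := by
      intro hc; exact hjR ((mem_Rlam_iff hlam).2 hc)
    have h2 : lam (j+1) ≤ lam j := hlam j (by omega) (by omega)
    omega
  have hconst2 : ∀ j, M ≤ j → j ≤ q → lam j = lam M := by
    intro j
    induction j with
    | zero => omega
    | succ k ih =>
      intro h1 h2
      rcases Nat.eq_or_lt_of_le h1 with he | hl
      · rw [← he]
      · have := hlamconst k (by omega) (by omega)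
        have := ih (by omega) (by omega)
        omega
  -- cascade
  have hcasc : ∀ j, M ≤ j → j ≤ q →
      β M + (j - M) < extDepth j (β (π j)) (u j) (L j) (Xcol n lam j - (n - j)) := by
    intro j
    induction j with
    | zero => omega
    | succ k ih =>
      intro hk1 hk2
      rcases Nat.eq_or_lt_of_le hk1 with he | hl
      · rw [← he]
        simpa using hbase
      · -- step from k to k+1, with M ≤ k < q
        have hkM : M ≤ k := by omega
        have hkq : k < q := by omega
        have hIH := ih hkM (by omega)
        have hπk1 : π (k+1) = k+1 := hfix (k+1) (by omega) (by omega)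
        have hXstep : Xcol n lam (k+1) + 1 = Xcol n lam k := by
          have := hlamconst k hkM hkq
          unfold Xcol
          omega
        -- X_{πk} ≥ X_k
        have hXπk : Xcol n lam k ≤ Xcol n lam (π k) := by
          rcases Nat.eq_or_lt_of_le hkM with he2 | hl2
          · rw [← he2]
            rw [← hv]
            omega
          · rw [hfix k hl2 (by omega)]
        have huk : n - k + u k = Xcol n lam (π k) := heqn k (by omega) (by omega)
        have huk1 : n - (k+1) + u (k+1) = Xcol n lam (k+1) := by
          rw [heqn (k+1) (by omega) (by omega), hπk1]
        -- presence bound: n - k ≤ X_{k+1}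
        have hpres : n - k ≤ Xcol n lam (k+1) := by
          have h1 : lam (k+1) = lam k := hlamconst k hkM hkq
          have h3 : lam (k+1) = lam M := hconst2 (k+1) (by omega) (by omega)
          unfold Xcol
          omega
        have hko := hord k (k+1) (by omega) (by omega) (by omega)
          (Xcol n lam (k+1) - (n - k)) (by omega) (by omega)
        have hi1 : Xcol n lam (k+1) - (n - k) + 1 = Xcol n lam k - (n - k) := by omega
        have hi2 : Xcol n lam (k+1) - (n - k) + (k + 1 - k) =
            Xcol n lam (k+1) - (n - (k+1)) := by omega
        rw [hi1, hi2] at hko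
        have hmono := valid_mono (hval k (by omega) (by omega))
          (show Xcol n lam k - (n - k) ≤ Xcol n lam k - (n - k) from le_refl _)
        omega
  -- criticality of M
  have hcritM : IsCritical R n β M := by
    refine ⟨hM1, hMn, ?_⟩
    intro j hj1 hj2
    have hc := hcasc j (by omega) hj2
    have hπj : π j = j := hfix j hj1 (by omega)
    have hqnn : j ≤ n := by omega
    have huj : n - j + u j = Xcol n lam j := by rw [heqn j (by omega) hqnn, hπj]
    have htop : extDepth j (β (π j)) (u j) (L j) (u j + 1) = β j := by
      rw [extDepth_ge_top (le_refl _), hπj]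
    have hmono := valid_mono (hval j (by omega) hqnn)
      (show Xcol n lam j - (n - j) ≤ u j + 1 by omega)
    omega
  -- β M < β v
  have hβMv : β M < β v := by
    have htop : extDepth M (β (π M)) (u M) (L M) (u M + 1) = β v := by
      rw [extDepth_ge_top (le_refl _)]
    have hmono := valid_mono (hval M hM1 hMn)
      (show Xcol n lam M - (n - M) ≤ u M + 1 by omega)
    omega
  exact rhs_no_witness R n β hflag hbound hv1.1 hvM hMn hcritM hβMv

end Necessity


/-! ### The explicit permuted family construction -/

/-- The interval rotation `i → i+1 → ... → x → i`. -/
def sigRot (i x m : ℕ) : ℕ :=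
  if m < i then m else if m < x then m + 1 else if m = x then i else m

/-- The jump column for the climbing paths. -/
noncomputable def cJump (n : ℕ) (lam : ℕ → ℕ) (q m : ℕ) : ℕ :=
  if m < q then Xcol n lam (m+1) else max (n - q) (Xcol n lam (q+1) + 1)

/-- The climbing profile of the long path. -/
noncomputable def Gfun (n : ℕ) (lam β : ℕ → ℕ) (i x c : ℕ) : ℕ :=
  max (β x + 1)
    (((Finset.Icc (i+1) x).filter (fun l => Xcol n lam l ≤ c)).sup (fun l => β l + 1))

/-- The entering-level function of the `m`-th path of the constructed family. -/
noncomputable def Ffun (n : ℕ) (lam β : ℕ → ℕ) (i x q m c : ℕ) : ℕ :=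
  if m < i then (if c ≤ Xcol n lam m then m else β m)
  else if m < x then (if c ≤ Xcol n lam (m+1) then m else β (m+1))
  else if m = x then (if c ≤ cJump n lam q x then x
    else if c ≤ Xcol n lam i then Gfun n lam β i x c else β i)
  else if m ≤ q then (if c ≤ cJump n lam q m then m
    else if c ≤ Xcol n lam m then β x + 1 + (m - x) else β m)
  else (if c ≤ Xcol n lam m then m else β m)

section Construction

variable {n : ℕ} {lam β : ℕ → ℕ} {i x q m c : ℕ}

lemma Xcol_anti_weak (hlam : IsPartition n lam) {v w : ℕ} (hv : 1 ≤ v) (hvw : v ≤ w)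
    (hw : w ≤ n) : Xcol n lam w ≤ Xcol n lam v := by
  rcases Nat.eq_or_lt_of_le hvw with he | hl
  · rw [he]
  · exact le_of_lt (Xcol_anti hlam hv hl hw)

lemma lam_ge_one (hlam : IsPartition n lam) (hqn : q < n) (hlamq : lam (q+1) < lam q)
    {j : ℕ} (hj1 : 1 ≤ j) (hjq : j ≤ q) : 1 ≤ lam j := by
  have := lam_anti hlam j q hj1 hjq (by omega)
  omega

lemma Xq_gap (hqn : q < n) (hlamq : lam (q+1) < lam q) :
    Xcol n lam (q+1) + 2 ≤ Xcol n lam q := by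
  unfold Xcol; omega

lemma cJ_lt_X (hlam : IsPartition n lam) (hqn : q < n) (hlamq : lam (q+1) < lam q)
    {m : ℕ} (hm1 : 1 ≤ m) (hm2 : m ≤ q) :
    cJump n lam q m < Xcol n lam m := by
  unfold cJump
  split_ifs with h
  · exact Xcol_anti hlam (by omega) (by omega) (by omega)
  · have h1 := Xq_gap hqn hlamq
    have h2 : m = q := by omega
    have h3 : 1 ≤ lam q := lam_ge_one hlam hqn hlamq (by omega) (le_refl q)
    rw [h2]
    unfold Xcol at *
    omega

lemma cJ_ge_src (hlam : IsPartition n lam) (hqn : q < n) (hlamq : lam (q+1) < lam q)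
    {m : ℕ} (hm2 : m ≤ q) : n - m ≤ cJump n lam q m := by
  unfold cJump
  split_ifs with h
  · have : 1 ≤ lam (m+1) := lam_ge_one hlam hqn hlamq (by omega) (by omega)
    unfold Xcol; omega
  · have h2 : m = q := by omega
    rw [h2]; omega

lemma cJ_ge_gap (hlam : IsPartition n lam) (hqn : q < n) (hlamq : lam (q+1) < lam q)
    {m : ℕ} (hm1 : 1 ≤ m) (hm2 : m ≤ q) :
    Xcol n lam (q+1) + 1 ≤ cJump n lam q m := by
  unfold cJump
  split_ifs with h
  · have h1 : Xcol n lam q ≤ Xcol n lam (m+1) :=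
      Xcol_anti_weak hlam (by omega) (by omega) (by omega)
    have h2 := Xq_gap hqn hlamq
    omega
  · omega

lemma G_le (hix : i < x) (hwit : ∀ j, i < j → j ≤ x → β j < β i) {c : ℕ} :
    Gfun n lam β i x c ≤ β i := by
  unfold Gfun
  apply max_le
  · have := hwit x hix (le_refl x); omega
  · apply Finset.sup_le
    intro l hl
    simp only [Finset.mem_filter, Finset.mem_Icc] at hl
    have := hwit l (by omega) (by omega)
    omega

lemma G_gt_x (hβ : UpperTuple n β) (hx1 : 1 ≤ x) (hxn : x ≤ n) {c : ℕ} :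
    x < Gfun n lam β i x c := by
  have h1 : x ≤ β x := (hβ x hx1 hxn).1
  unfold Gfun
  have := le_max_left (β x + 1)
    (((Finset.Icc (i+1) x).filter (fun l => Xcol n lam l ≤ c)).sup (fun l => β l + 1))
  omega

lemma G_mono {c c' : ℕ} (h : c ≤ c') : Gfun n lam β i x c ≤ Gfun n lam β i x c' := by
  unfold Gfun
  apply max_le (le_max_left _ _)
  apply le_trans _ (le_max_right _ _)
  apply Finset.sup_mono
  intro l hl
  simp only [Finset.mem_filter, Finset.mem_Icc] at hl ⊢
  exact ⟨hl.1, le_trans hl.2 h⟩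

lemma G_ge {c l : ℕ} (h1 : i < l) (h2 : l ≤ x) (h3 : Xcol n lam l ≤ c) :
    β l + 1 ≤ Gfun n lam β i x c := by
  unfold Gfun
  apply le_trans _ (le_max_right _ _)
  have hmem : l ∈ (Finset.Icc (i+1) x).filter (fun l => Xcol n lam l ≤ c) := by
    rw [Finset.mem_filter, Finset.mem_Icc]
    exact ⟨⟨h1, h2⟩, h3⟩
  exact Finset.le_sup (f := fun l => β l + 1) hmem

lemma G_ge_base {c : ℕ} : β x + 1 ≤ Gfun n lam β i x c := by unfold Gfun; exact le_max_left _ _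

lemma G_eq_low (hlam : IsPartition n lam) (hi1 : 1 ≤ i) {c : ℕ} (hxn : x ≤ n)
    (hc : c ≤ Xcol n lam x) : Gfun n lam β i x c = β x + 1 := by
  unfold Gfun
  rw [max_eq_left]
  apply Finset.sup_le
  intro l hl
  simp only [Finset.mem_filter, Finset.mem_Icc] at hl
  have hlx : l = x := by
    by_contra hne
    have : Xcol n lam x < Xcol n lam l := Xcol_anti hlam (by omega) (by omega) hxn
    omega
  rw [hlx]


/-! #### Branch evaluation of `Ffun` -/

lemma F_lo (h : m < i) :
    Ffun n lam β i x q m c = if c ≤ Xcol n lam m then m else β m := by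
  unfold Ffun; rw [if_pos h]

lemma F_rot (h1 : i ≤ m) (h2 : m < x) :
    Ffun n lam β i x q m c = if c ≤ Xcol n lam (m+1) then m else β (m+1) := by
  unfold Ffun; rw [if_neg (by omega), if_pos h2]

lemma F_x (hix : i < x) :
    Ffun n lam β i x q x c = if c ≤ cJump n lam q x then x
      else if c ≤ Xcol n lam i then Gfun n lam β i x c else β i := by
  unfold Ffun
  rw [if_neg (by omega), if_neg (by omega), if_pos rfl]

lemma F_grp (h1 : x < m) (h2 : m ≤ q) (hix : i < x) :
    Ffun n lam β i x q m c = if c ≤ cJump n lam q m then m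
      else if c ≤ Xcol n lam m then β x + 1 + (m - x) else β m := by
  unfold Ffun
  rw [if_neg (by omega), if_neg (by omega), if_neg (by omega), if_pos h2]

lemma F_hi (h1 : q < m) (hix : i < x) (hxq : x ≤ q) :
    Ffun n lam β i x q m c = if c ≤ Xcol n lam m then m else β m := by
  unfold Ffun
  rw [if_neg (by omega), if_neg (by omega), if_neg (by omega), if_neg (by omega)]

/-! #### Basic path properties of `Ffun` -/

lemma F_mono (hn : 1 ≤ n) (hlam : IsPartition n lam) (hβ : UpperTuple n β)
    (hi1 : 1 ≤ i) (hix : i < x) (hxq : x ≤ q) (hqn : q < n)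
    (hlamq : lam (q+1) < lam q)
    (hwit : ∀ j, i < j → j ≤ x → β j < β i)
    (hcrit : ∀ j, x < j → j ≤ q → β x + j < β j + x)
    {m : ℕ} (hm1 : 1 ≤ m) (hmn : m ≤ n) :
    Monotone (Ffun n lam β i x q m) := by
  intro c c' hcc
  rcases lt_or_ge m i with h | h
  · rw [F_lo h, F_lo h]
    have := (hβ m hm1 hmn).1
    split_ifs <;> omega
  rcases lt_or_ge m x with h2 | h2
  · rw [F_rot h h2, F_rot h h2]
    have := (hβ (m+1) (by omega) (by omega)).1
    split_ifs <;> omega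
  rcases Nat.eq_or_lt_of_le h2 with h3 | h3
  · rw [← h3, F_x hix, F_x hix]
    have hgm : Gfun n lam β i x c ≤ Gfun n lam β i x c' := G_mono hcc
    have hgl : Gfun n lam β i x c' ≤ β i := G_le hix hwit
    have hgl2 : Gfun n lam β i x c ≤ β i := G_le hix hwit
    have hgx : x < Gfun n lam β i x c := G_gt_x hβ (by omega) (by omega)
    have hgx' : x < Gfun n lam β i x c' := G_gt_x hβ (by omega) (by omega)
    have hxb : x < β i := by
      have h5 := hwit x hix (le_refl x)
      have h6 := (hβ x (by omega) (by omega)).1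
      omega
    split_ifs <;> omega
  rcases le_or_gt m q with h4 | h4
  · rw [F_grp h3 h4 hix, F_grp h3 h4 hix]
    have hA : β x + 1 + (m - x) ≤ β m := by
      have := hcrit m h3 h4; omega
    have hmA : m ≤ β x + 1 + (m - x) := by
      have := (hβ x (by omega) (by omega)).1; omega
    split_ifs <;> omega
  · rw [F_hi h4 hix hxq, F_hi h4 hix hxq]
    have := (hβ m hm1 hmn).1
    split_ifs <;> omega

lemma F_src (hn : 1 ≤ n) (hlam : IsPartition n lam)
    (hi1 : 1 ≤ i) (hix : i < x) (hxq : x ≤ q) (hqn : q < n)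
    (hlamq : lam (q+1) < lam q)
    {m : ℕ} (hm1 : 1 ≤ m) (hmn : m ≤ n) :
    Ffun n lam β i x q m (n - m) = m := by
  rcases lt_or_ge m i with h | h
  · rw [F_lo h, if_pos (by unfold Xcol; omega)]
  rcases lt_or_ge m x with h2 | h2
  · rw [F_rot h h2]
    have : 1 ≤ lam (m+1) := lam_ge_one hlam hqn hlamq (by omega) (by omega)
    rw [if_pos (by unfold Xcol; omega)]
  rcases Nat.eq_or_lt_of_le h2 with h3 | h3
  · subst h3
    rw [F_x hix]
    rw [if_pos (cJ_ge_src hlam hqn hlamq hxq)]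
  rcases le_or_gt m q with h4 | h4
  · rw [F_grp h3 h4 hix]
    have := cJ_ge_src (q := q) hlam hqn hlamq h4
    rw [if_pos this]
  · rw [F_hi h4 hix hxq, if_pos (by unfold Xcol; omega)]

lemma F_end (hn : 1 ≤ n) (hlam : IsPartition n lam)
    (hi1 : 1 ≤ i) (hix : i < x) (hxq : x ≤ q) (hqn : q < n)
    (hlamq : lam (q+1) < lam q)
    {m : ℕ} (hm1 : 1 ≤ m) (hmn : m ≤ n)
    {c : ℕ} (hc : Xcol n lam (sigRot i x m) < c) :
    Ffun n lam β i x q m c = β (sigRot i x m) := by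
  unfold sigRot at hc ⊢
  rcases lt_or_ge m i with h | h
  · rw [if_pos h] at hc ⊢
    rw [F_lo h, if_neg (by omega)]
  rcases lt_or_ge m x with h2 | h2
  · rw [if_neg (by omega), if_pos h2] at hc ⊢
    rw [F_rot h h2, if_neg (by omega)]
  rcases Nat.eq_or_lt_of_le h2 with h3 | h3
  · subst h3
    rw [if_neg (by omega), if_neg (by omega), if_pos rfl] at hc ⊢
    rw [F_x hix]
    have hcj : cJump n lam q x < Xcol n lam x :=
      cJ_lt_X hlam hqn hlamq (by omega) hxq
    have hXxi : Xcol n lam x < Xcol n lam i := Xcol_anti hlam hi1 hix (by omega)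
    rw [if_neg (by omega), if_neg (by omega)]
  rcases le_or_gt m q with h4 | h4
  · rw [if_neg (by omega), if_neg (by omega), if_neg (by omega)] at hc ⊢
    rw [F_grp h3 h4 hix]
    have hcj : cJump n lam q m < Xcol n lam m :=
      cJ_lt_X hlam hqn hlamq (by omega) h4
    rw [if_neg (by omega), if_neg (by omega)]
  · rw [if_neg (by omega), if_neg (by omega), if_neg (by omega)] at hc ⊢
    rw [F_hi h4 hix hxq, if_neg (by omega)]


lemma sig_lo (h : m < i) : sigRot i x m = m := by unfold sigRot; rw [if_pos h]
lemma sig_rot (h1 : i ≤ m) (h2 : m < x) : sigRot i x m = m + 1 := by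
  unfold sigRot; rw [if_neg (by omega), if_pos h2]
lemma sig_x (hix : i < x) : sigRot i x x = i := by
  unfold sigRot; rw [if_neg (by omega), if_neg (by omega), if_pos rfl]
lemma sig_hi (hix : i ≤ x) (h : x < m) : sigRot i x m = m := by
  unfold sigRot; rw [if_neg (by omega), if_neg (by omega), if_neg (by omega)]

/-- Lower bound on `Ffun` below `i`. -/
lemma F_lb (hn : 1 ≤ n) (hβ : UpperTuple n β)
    (hi1 : 1 ≤ i) (hix : i < x) (hxq : x ≤ q) (hqn : q < n)
    {m' c k : ℕ} (hm'1 : 1 ≤ m') (hm'n : m' ≤ n) (hk1 : k < m') (hk2 : k < i) :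
    k < Ffun n lam β i x q m' c := by
  have hβx := (hβ x (by omega) (by omega)).1
  have hβi := (hβ i (by omega) (by omega)).1
  have hβm' := (hβ m' hm'1 hm'n).1
  rcases lt_or_ge m' i with h | h
  · rw [F_lo h]; split_ifs <;> omega
  rcases lt_or_ge m' x with h2 | h2
  · rw [F_rot h h2]
    have := (hβ (m'+1) (by omega) (by omega)).1
    split_ifs <;> omega
  rcases Nat.eq_or_lt_of_le h2 with h3 | h3
  · subst h3
    rw [F_x hix]
    have hg : x < Gfun n lam β i x c := G_gt_x hβ (by omega) (by omega)
    split_ifs <;> omega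
  rcases le_or_gt m' q with h4 | h4
  · rw [F_grp h3 h4 hix]
    split_ifs <;> omega
  · rw [F_hi h4 hix hxq]
    split_ifs <;> omega

/-- The main pointwise separation of consecutive constructed paths. -/
lemma F_key (hn : 1 ≤ n) (hlam : IsPartition n lam) (hβ : UpperTuple n β)
    (hi1 : 1 ≤ i) (hix : i < x) (hxq : x ≤ q) (hqn : q < n)
    (hlamq : lam (q+1) < lam q)
    (hwit : ∀ j, i < j → j ≤ x → β j < β i)
    (hcrit : ∀ j, x < j → j ≤ q → β x + j < β j + x)
    {m m' : ℕ} (hm1 : 1 ≤ m) (hmm : m < m') (hm'n : m' ≤ n)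
    {c : ℕ} (hcm : c ≤ Xcol n lam (sigRot i x m))
    (hcm' : c ≤ Xcol n lam (sigRot i x m')) :
    Ffun n lam β i x q m (c+1) < Ffun n lam β i x q m' c := by
  have hβx := (hβ x (by omega) (by omega)).1
  have hβm' := (hβ m' (by omega) hm'n).1
  -- Case A : m < i
  rcases lt_or_ge m i with hA | hA
  · have htop : Ffun n lam β i x q m (c+1) = m := by
      rw [F_lo hA, if_pos ?_]
      -- c + 1 ≤ Xcol m since Xcol (sigRot m') < Xcol m
      have hsig : m < sigRot i x m' ∧ sigRot i x m' ≤ n := by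
        unfold sigRot
        split_ifs <;> omega
      have := Xcol_anti hlam (by omega) hsig.1 hsig.2
      omega
    rw [htop]
    exact F_lb hn hβ hi1 hix hxq hqn (by omega) hm'n hmm hA
  -- Case B : i ≤ m < x
  rcases lt_or_ge m x with hB | hB
  · rw [sig_rot hA hB] at hcm
    rcases lt_or_ge m' x with hB1 | hB1
    · -- m' also rotated
      rw [sig_rot (by omega) hB1] at hcm'
      have hX : Xcol n lam (m'+1) < Xcol n lam (m+1) :=
        Xcol_anti hlam (by omega) (by omega) (by omega)
      rw [F_rot hA hB, if_pos (by omega), F_rot (by omega) hB1, if_pos hcm']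
      omega
    rcases Nat.eq_or_lt_of_le hB1 with hB2 | hB2
    · -- m' = x
      subst hB2
      rw [F_rot hA hB, F_x hix]
      have hXx : Xcol n lam x < Xcol n lam (m+1) ∨ x = m + 1 := by
        rcases Nat.eq_or_lt_of_le (show m + 1 ≤ x by omega) with h | h
        · right; omega
        · left; exact Xcol_anti hlam (by omega) h (by omega)
      have hcjx : cJump n lam q x < Xcol n lam x := cJ_lt_X hlam hqn hlamq (by omega) hxq
      rw [sig_x hix] at hcm'
      rcases lt_or_ge c (Xcol n lam (m+1)) with hc1 | hc1
      · rw [if_pos (by omega)]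
        have hg : x < Gfun n lam β i x c := G_gt_x hβ (by omega) (by omega)
        have hβi : x < β i := by
          have := hwit x hix (le_refl x); omega
        split_ifs <;> omega
      · have hc2 : c = Xcol n lam (m+1) := by omega
        rw [if_neg (by omega)]
        have hge : β (m+1) + 1 ≤ Gfun n lam β i x c := G_ge (by omega) (by omega) (by omega)
        have hcj2 : cJump n lam q x < c := by
          rcases hXx with h | h
          · omega
          · rw [← h] at hc2; omega
        rw [if_neg (by omega), if_pos hcm']
        omega
    rcases le_or_gt m' q with hB3 | hB3
    · -- m' in the climbing group
      rw [sig_hi (by omega) (by omega)] at hcm'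
      have hX : Xcol n lam m' < Xcol n lam (m+1) :=
        Xcol_anti hlam (by omega) (by omega) (by omega)
      rw [F_rot hA hB, if_pos (by omega), F_grp hB2 hB3 hix]
      have hA' : x + 1 ≤ β x + 1 + (m' - x) := by omega
      split_ifs <;> omega
    · -- m' fixed high
      rw [sig_hi (by omega) (by omega)] at hcm'
      have hX : Xcol n lam m' < Xcol n lam (m+1) :=
        Xcol_anti hlam (by omega) (by omega) (by omega)
      rw [F_rot hA hB, if_pos (by omega), F_hi hB3 hix hxq, if_pos hcm']
      omega
  -- Case C : m = x
  rcases Nat.eq_or_lt_of_le hB with hC | hC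
  · subst hC
    rw [sig_x hix] at hcm
    rcases le_or_gt m' q with hC1 | hC1
    · -- m' in the climbing group, x < q
      rw [sig_hi (by omega) (by omega)] at hcm'
      have hxq' : x < q := by omega
      have hcjx : cJump n lam q x = Xcol n lam (x+1) := by
        unfold cJump; rw [if_pos hxq']
      have hXm' : Xcol n lam m' ≤ Xcol n lam (x+1) :=
        Xcol_anti_weak hlam (by omega) (by omega) (by omega)
      rcases le_or_gt (c+1) (cJump n lam q x) with hc1 | hc1
      · rw [F_x hix, if_pos hc1, F_grp (by omega) hC1 hix]
        have : x + 1 ≤ β x + 1 + (m' - x) := by omega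
        split_ifs <;> omega
      · -- c = Xcol (x+1) and m' = x+1
        have hc2 : c = Xcol n lam (x+1) := by omega
        have hm'2 : m' = x + 1 := by
          by_contra hne
          have : Xcol n lam m' < Xcol n lam (x+1) :=
            Xcol_anti hlam (by omega) (by omega) (by omega)
          omega
        subst hm'2
        have hXxx : Xcol n lam (x+1) < Xcol n lam x :=
          Xcol_anti hlam (by omega) (by omega) (by omega)
        have hXxi : Xcol n lam x < Xcol n lam i :=
          Xcol_anti hlam (by omega) (by omega) (by omega)
        rw [F_x hix, if_neg (by omega), if_pos (by omega),
          G_eq_low hlam hi1 (by omega) (by omega), F_grp (by omega) hC1 hix]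
        have hcj' : cJump n lam q (x+1) < Xcol n lam (x+1) :=
          cJ_lt_X hlam hqn hlamq (by omega) hC1
        rw [if_neg (by omega), if_pos (by omega)]
        omega
    · -- m' fixed high
      rw [sig_hi (by omega) (by omega)] at hcm'
      have hXm' : Xcol n lam m' ≤ Xcol n lam (q+1) :=
        Xcol_anti_weak hlam (by omega) (by omega) (by omega)
      have hgap : Xcol n lam (q+1) + 1 ≤ cJump n lam q x :=
        cJ_ge_gap hlam hqn hlamq (by omega) hxq
      rw [F_x hix, if_pos (by omega), F_hi hC1 hix hxq, if_pos hcm']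
      omega
  -- Case D : x < m ≤ q
  rcases le_or_gt m q with hD | hD
  · rw [sig_hi (by omega) hC] at hcm
    rcases le_or_gt m' q with hD1 | hD1
    · -- both in the group
      rw [sig_hi (by omega) (by omega)] at hcm'
      have hXm' : Xcol n lam m' ≤ Xcol n lam (m+1) :=
        Xcol_anti_weak hlam (by omega) (by omega) (by omega)
      have hmq : m < q := by omega
      have hcjm : cJump n lam q m = Xcol n lam (m+1) := by
        unfold cJump; rw [if_pos hmq]
      rcases le_or_gt (c+1) (cJump n lam q m) with hc1 | hc1
      · rw [F_grp hC hD hix, if_pos hc1, F_grp (by omega) hD1 hix]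
        have : m + 1 ≤ β x + 1 + (m' - x) := by omega
        split_ifs <;> omega
      · have hc2 : c = Xcol n lam (m+1) := by omega
        have hm'2 : m' = m + 1 := by
          by_contra hne
          have : Xcol n lam m' < Xcol n lam (m+1) :=
            Xcol_anti hlam (by omega) (by omega) (by omega)
          omega
        subst hm'2
        have hXmm : Xcol n lam (m+1) < Xcol n lam m :=
          Xcol_anti hlam (by omega) (by omega) (by omega)
        rw [F_grp hC hD hix, if_neg (by omega), if_pos (by omega),
          F_grp (by omega) hD1 hix]
        have hcj' : cJump n lam q (m+1) < Xcol n lam (m+1) :=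
          cJ_lt_X hlam hqn hlamq (by omega) hD1
        rw [if_neg (by omega), if_pos (by omega)]
        omega
    · -- m' fixed high
      rw [sig_hi (by omega) (by omega)] at hcm'
      have hXm' : Xcol n lam m' ≤ Xcol n lam (q+1) :=
        Xcol_anti_weak hlam (by omega) (by omega) (by omega)
      have hgap : Xcol n lam (q+1) + 1 ≤ cJump n lam q m :=
        cJ_ge_gap hlam hqn hlamq (by omega) hD
      rw [F_grp hC hD hix, if_pos (by omega), F_hi hD1 hix hxq, if_pos hcm']
      omega
  -- Case E : q < m
  · rw [sig_hi (by omega) hC] at hcm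
    rw [sig_hi (by omega) (by omega)] at hcm'
    have hX : Xcol n lam m' < Xcol n lam m :=
      Xcol_anti hlam (by omega) (by omega) (by omega)
    rw [F_hi hD hix hxq, if_pos (by omega), F_hi (by omega) hix hxq, if_pos hcm']
    omega

end Construction




noncomputable def uRot (n : ℕ) (lam : ℕ → ℕ) (i x m : ℕ) : ℕ :=
  Xcol n lam (sigRot i x m) - (n - m)

noncomputable def LRot (n : ℕ) (lam β : ℕ → ℕ) (i x q m j : ℕ) : ℕ :=
  Ffun n lam β i x q m (n - m + j)

section Assemble

variable {n : ℕ} {lam β : ℕ → ℕ} {i x q : ℕ}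

lemma sig_bounds (hi1 : 1 ≤ i) (hix : i < x) (hxn : x ≤ n)
    {m : ℕ} (hm1 : 1 ≤ m) (hmn : m ≤ n) :
    1 ≤ sigRot i x m ∧ sigRot i x m ≤ n := by
  unfold sigRot; split_ifs <;> omega

lemma X_sig_ge (hlam : IsPartition n lam)
    (hi1 : 1 ≤ i) (hix : i < x) (hxq : x ≤ q) (hqn : q < n)
    (hlamq : lam (q+1) < lam q)
    {m : ℕ} (hm1 : 1 ≤ m) (hmn : m ≤ n) :
    n - m ≤ Xcol n lam (sigRot i x m) := by
  unfold sigRot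
  split_ifs with h1 h2 h3
  · unfold Xcol; omega
  · have : 1 ≤ lam (m+1) := lam_ge_one hlam hqn hlamq (by omega) (by omega)
    unfold Xcol; omega
  · have h4 : Xcol n lam x < Xcol n lam i := Xcol_anti hlam hi1 hix (by omega)
    have h5 : 1 ≤ lam x := lam_ge_one hlam hqn hlamq (by omega) (by omega)
    unfold Xcol at *; omega
  · unfold Xcol; omega

lemma extDepth_F (hn : 1 ≤ n) (hlam : IsPartition n lam)
    (hi1 : 1 ≤ i) (hix : i < x) (hxq : x ≤ q) (hqn : q < n)
    (hlamq : lam (q+1) < lam q)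
    {m : ℕ} (hm1 : 1 ≤ m) (hmn : m ≤ n) (j : ℕ) :
    extDepth m (β (sigRot i x m)) (uRot n lam i x m) (LRot n lam β i x q m) j =
      Ffun n lam β i x q m (n - m + j) := by
  have hX := X_sig_ge hlam hi1 hix hxq hqn hlamq hm1 hmn
  unfold extDepth LRot uRot
  split_ifs with h1 h2
  · subst h1
    rw [Nat.add_zero]
    exact (F_src hn hlam hi1 hix hxq hqn hlamq hm1 hmn).symm
  · rfl
  · unfold uRot at h2
    exact (F_end hn hlam hi1 hix hxq hqn hlamq hm1 hmn (by omega)).symm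

lemma valid_F (hn : 1 ≤ n) (hlam : IsPartition n lam) (hβ : UpperTuple n β)
    (hi1 : 1 ≤ i) (hix : i < x) (hxq : x ≤ q) (hqn : q < n)
    (hlamq : lam (q+1) < lam q)
    (hwit : ∀ j, i < j → j ≤ x → β j < β i)
    (hcrit : ∀ j, x < j → j ≤ q → β x + j < β j + x)
    {m : ℕ} (hm1 : 1 ≤ m) (hmn : m ≤ n) :
    ValidPath m (β (sigRot i x m)) (uRot n lam i x m) (LRot n lam β i x q m) := by
  intro j hj
  rw [extDepth_F hn hlam hi1 hix hxq hqn hlamq hm1 hmn,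
    extDepth_F hn hlam hi1 hix hxq hqn hlamq hm1 hmn]
  exact F_mono hn hlam hβ hi1 hix hxq hqn hlamq hwit hcrit hm1 hmn (by omega)

lemma no_common (hn : 1 ≤ n) (hlam : IsPartition n lam) (hβ : UpperTuple n β)
    (hi1 : 1 ≤ i) (hix : i < x) (hxq : x ≤ q) (hqn : q < n)
    (hlamq : lam (q+1) < lam q)
    (hwit : ∀ j, i < j → j ≤ x → β j < β i)
    (hcrit : ∀ j, x < j → j ≤ q → β x + j < β j + x)
    {m m' : ℕ} (hm1 : 1 ≤ m) (hmm : m < m') (hm'n : m' ≤ n) :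
    ¬∃ p : ℕ × ℕ,
      OnPath (n - m) m (β (sigRot i x m)) (uRot n lam i x m) (LRot n lam β i x q m) p ∧
      OnPath (n - m') m' (β (sigRot i x m')) (uRot n lam i x m') (LRot n lam β i x q m') p := by
  rintro ⟨p, ⟨j, hj, hp1, hl1, hr1⟩, ⟨j', hj', hp1', hl1', hr1'⟩⟩
  have hXm := X_sig_ge hlam hi1 hix hxq hqn hlamq hm1 (by omega)
  have hXm' := X_sig_ge hlam hi1 hix hxq hqn hlamq (m := m') (by omega) hm'n
  rw [extDepth_F hn hlam hi1 hix hxq hqn hlamq hm1 (by omega)] at hr1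
  rw [extDepth_F hn hlam hi1 hix hxq hqn hlamq (by omega) hm'n] at hl1'
  have hcm : n - m + j ≤ Xcol n lam (sigRot i x m) := by
    unfold uRot at hj; omega
  have hcm' : n - m + j ≤ Xcol n lam (sigRot i x m') := by
    unfold uRot at hj'; omega
  have hkey := F_key hn hlam hβ hi1 hix hxq hqn hlamq hwit hcrit hm1 hmm hm'n hcm hcm'
  have he : n - m' + j' = n - m + j := by omega
  rw [he] at hl1'
  have h1 : p.2 ≤ Ffun n lam β i x q m (n - m + j + 1) := by
    have : n - m + (j + 1) = n - m + j + 1 := by omega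
    rwa [this] at hr1
  omega

lemma sig_bij (hi1 : 1 ≤ i) (hix : i < x) (hxn : x ≤ n) :
    Set.BijOn (sigRot i x) (Set.Icc 1 n) (Set.Icc 1 n) := by
  refine ⟨?_, ?_, ?_⟩
  · intro m hm
    rw [Set.mem_Icc] at hm ⊢
    exact sig_bounds hi1 hix hxn hm.1 hm.2
  · intro a ha b hb hab
    rw [Set.mem_Icc] at ha hb
    unfold sigRot at hab
    split_ifs at hab <;> omega
  · intro y hy
    rw [Set.mem_Icc] at hy
    by_cases h1 : y = i
    · refine ⟨x, Set.mem_Icc.mpr ⟨by omega, hxn⟩, ?_⟩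
      rw [sig_x hix]; omega
    by_cases h2 : i < y ∧ y ≤ x
    · obtain ⟨h2a, h2b⟩ := h2
      refine ⟨y - 1, Set.mem_Icc.mpr ⟨by omega, by omega⟩, ?_⟩
      rw [sig_rot (by omega) (by omega)]
      omega
    · have hy' : y < i ∨ x < y := by
        by_contra hc
        push_neg at hc
        exact h2 ⟨by omega, by omega⟩
      refine ⟨y, Set.mem_Icc.mpr ⟨hy.1, hy.2⟩, ?_⟩
      unfold sigRot
      rcases hy' with h | h
      · rw [if_pos h]
      · rw [if_neg (by omega), if_neg (by omega), if_neg (by omega)]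

lemma not_nonperm_of_witness (hn : 1 ≤ n) (hlam : IsPartition n lam)
    (hβ : UpperTuple n β)
    (hi1 : 1 ≤ i) (hix : i < x) (hxq : x ≤ q) (hqn : q < n)
    (hlamq : lam (q+1) < lam q)
    (hwit : ∀ j, i < j → j ≤ x → β j < β i)
    (hcrit : ∀ j, x < j → j ≤ q → β x + j < β j + x) :
    ¬ Nonpermutable n lam β := by
  intro hNP
  refine hNP (sigRot i x) (sig_bij hi1 hix (by omega))
    ⟨x, by omega, by omega, by rw [sig_x hix]; omega⟩
    ⟨uRot n lam i x, LRot n lam β i x q, ?_, ?_⟩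
  · intro m h1 h2
    constructor
    · have hX := X_sig_ge hlam hi1 hix hxq hqn hlamq h1 h2
      have hb := sig_bounds hi1 hix (by omega) h1 h2
      unfold uRot Xcol at hX ⊢
      omega
    · exact valid_F hn hlam hβ hi1 hix hxq hqn hlamq hwit hcrit h1 h2
  · intro m m' h1 h2 h3 h4 h5
    rcases lt_or_gt_of_ne h5 with h | h
    · exact no_common hn hlam hβ hi1 hix hxq hqn hlamq hwit hcrit h1 h h4
    · rintro ⟨p, hp1, hp2⟩
      exact no_common hn hlam hβ hi1 hix hxq hqn hlamq hwit hcrit h3 h h2 ⟨p, hp2, hp1⟩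

end Assemble

/-- Main theorem: `(λ, β)` is nonpermutable iff `β` is a gapless core `λ`-tuple
(its `R_λ`-critical list is a flag critical list) that is bounded by its platform. -/
theorem stmt11 (n : ℕ) (hn : 1 ≤ n) (lam β : ℕ → ℕ) (hlam : IsPartition n lam)
    (hβ : UpperTuple n β) :
    Nonpermutable n lam β ↔
      (FlagCriticalList (Rlam n lam) n β ∧
        ∀ i, 1 ≤ i → i ≤ n → β i ≤ platformT (Rlam n lam) n β i) := by
  constructor
  · intro hNP
    by_contra hc
    obtain ⟨i, x, hi1, hix, hxn, hcrit, hlamx, hwit⟩ := witness_of_notRHS hn hlam hβ hc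
    have hxltn : x < n := by
      rcases Nat.eq_or_lt_of_le hxn with he | hl
      · exfalso
        have h1 := hwit x hix (le_refl x)
        have h2 := (hβ x (by omega) hxn).1
        have h3 := (hβ i (by omega) (by omega)).2
        omega
      · exact hl
    have hqR := carrelEnd_mem_R_of_crit (Rlam n lam) hβ hcrit hxltn
    have hq' := (mem_Rlam_iff hlam).1 hqR
    have hxq : x ≤ carrelEnd (Rlam n lam) n x := carrelEnd_ge _ n (by omega)
    exact not_nonperm_of_witness hn hlam hβ hi1 hix hxq hq'.2.1 hq'.2.2 hwit
      (fun j h1 h2 => hcrit.2.2 j h1 h2) hNP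
  · rintro ⟨hflag, hbound⟩
    exact nonperm_of_rhs hn hlam hβ hflag hbound
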